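/- arXiv:2308.15181 — 2 statements merged into one kernel-verified Lean document; each statement's English description precedes it below -/
import Mathlib

section
/- For probability measures $\mu,\nu$ on a Polish space $E$ with finite second moments, and for any $1\le k\le N$, if $\mu^{(N)},\nu^{(N)}$ are exchangeable probability measures on $E^N$ with marginals onto the first $k$ coordinates $\mu^{(k)},\nu^{(k)}$ respectively, then $\mathbb{W}_2(\mu^{(k)},\nu^{(k)})^2\le \frac{k}{N}\,\mathbb{W}_2(\mu^{(N)},\nu^{(N)})^2$, where the Wasserstein distances on product spaces are taken with respect to the $\ell^2$-sum of the metric on each coordinate. -/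
open MeasureTheory ENNReal

/-- The squared `L²`-Wasserstein "distance" associated to a cost `d`, defined as the infimum
over all couplings of the integral of the squared cost. -/
noncomputable def W2sq {α : Type*} [MeasurableSpace α] (d : α → α → ℝ)
    (μ ν : Measure α) : ℝ≥0∞ :=
  ⨅ π : {π : Measure (α × α) // π.map Prod.fst = μ ∧ π.map Prod.snd = ν},
    ∫⁻ p, ENNReal.ofReal (d p.1 p.2) ^ 2 ∂(π.1)

/-!
Given a coupling `π` of `μ^{(N)}` and `ν^{(N)}`, push it forward along the projections onto the
`N` cyclic windows `m, m + 1, …, m + k - 1` (mod `N`) of coordinates and average. Exchangeability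
makes each pushforward a coupling of the `k`-marginals, and since every coordinate lies in
exactly `k` of the `N` windows, the averaged coupling costs `k / N` times the cost of `π`.
-/

lemma sum_sum_add_eq_card_nsmul {G κ M : Type*} [AddGroup G] [Fintype G] [Fintype κ]
    [AddCommMonoid M] (f : G → M) (e : κ → G) :
    ∑ m, ∑ i, f (m + e i) = Fintype.card κ • ∑ j, f j := by
  rw [Finset.sum_comm, ← Finset.card_univ, ← Finset.sum_const]
  exact Finset.sum_congr rfl fun i _ => Equiv.sum_comp (Equiv.addRight (e i)) f

lemma sum_lintegral_le_lintegral_sum {α ι : Type*} [MeasurableSpace α] {μ : Measure α}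
    (s : Finset ι) (f : ι → α → ℝ≥0∞) :
    ∑ i ∈ s, ∫⁻ a, f i a ∂μ ≤ ∫⁻ a, ∑ i ∈ s, f i a ∂μ := by
  classical
  induction s using Finset.induction_on with
  | empty => simp
  | insert i s hi ih =>
    simp only [Finset.sum_insert hi]
    grw [ih]
    exact le_lintegral_add _ _

lemma map_inv_card_smul_sum_eq {ι α β : Type*} [Fintype ι] [Nonempty ι] [MeasurableSpace α]
    [MeasurableSpace β] {f : α → β} (hf : Measurable f) {π : ι → Measure α} {μ : Measure β}
    (h : ∀ i, (π i).map f = μ) :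
    ((Fintype.card ι : ℝ≥0∞)⁻¹ • ∑ i, π i).map f = μ := by
  rw [Measure.map_smul, Measure.map_finset_sum hf.aemeasurable]
  simp only [h, Finset.sum_const, Finset.card_univ, ← Nat.cast_smul_eq_nsmul ℝ≥0∞, smul_smul]
  rw [ENNReal.inv_mul_cancel (by simp) (natCast_ne_top _), one_smul]

lemma map_fst_map_prodMap {α β γ : Type*} [MeasurableSpace α] [MeasurableSpace β]
    [MeasurableSpace γ] {f : α → γ} {g : β → γ} (hf : Measurable f) (hg : Measurable g)
    (π : Measure (α × β)) :
    (π.map (Prod.map f g)).map Prod.fst = (π.map Prod.fst).map f := by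
  rw [Measure.map_map measurable_fst (hf.prodMap hg), Measure.map_map hf measurable_fst]
  rfl

lemma map_snd_map_prodMap {α β γ : Type*} [MeasurableSpace α] [MeasurableSpace β]
    [MeasurableSpace γ] {f : α → γ} {g : β → γ} (hf : Measurable f) (hg : Measurable g)
    (π : Measure (α × β)) :
    (π.map (Prod.map f g)).map Prod.snd = (π.map Prod.snd).map g := by
  rw [Measure.map_map measurable_snd (hf.prodMap hg), Measure.map_map hg measurable_snd]
  rfl

section W2sq

variable {α : Type*} [MeasurableSpace α] {d : α → α → ℝ} {μ ν : Measure α}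

lemma W2sq_le_lintegral {π : Measure (α × α)} (h₁ : π.map Prod.fst = μ)
    (h₂ : π.map Prod.snd = ν) :
    W2sq d μ ν ≤ ∫⁻ p, ENNReal.ofReal (d p.1 p.2) ^ 2 ∂π :=
  iInf_le_of_le ⟨π, h₁, h₂⟩ le_rfl

lemma le_mul_W2sq {a c : ℝ≥0∞} (hc₀ : c ≠ 0) (hc : c ≠ ∞)
    (h : ∀ π : Measure (α × α), π.map Prod.fst = μ → π.map Prod.snd = ν →
      a ≤ c * ∫⁻ p, ENNReal.ofReal (d p.1 p.2) ^ 2 ∂π) :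
    a ≤ c * W2sq d μ ν := by
  rw [W2sq, ENNReal.mul_iInf_of_ne hc₀ hc]
  exact le_iInf fun π => h π.1 π.2.1 π.2.2

end W2sq

lemma ofReal_sqrt_sum_dist_sq_sq {ι E : Type*} [Fintype ι] [Dist E] (ξ η : ι → E) :
    ENNReal.ofReal √(∑ i, dist (ξ i) (η i) ^ 2) ^ 2 =
      ∑ i, ENNReal.ofReal (dist (ξ i) (η i) ^ 2) := by
  rw [← ENNReal.ofReal_pow (Real.sqrt_nonneg _), Real.sq_sqrt (by positivity),
    ENNReal.ofReal_sum_of_nonneg fun i _ => sq_nonneg _]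

section Shift

variable {E ι κ : Type*} [MeasurableSpace E] [AddGroup ι]

def shiftComp (e : κ → ι) (m : ι) (x : ι → E) : κ → E := fun i => x (m + e i)

@[fun_prop]
lemma measurable_shiftComp (e : κ → ι) (m : ι) : Measurable (shiftComp (E := E) e m) := by
  unfold shiftComp
  fun_prop

lemma map_shiftComp {μ : Measure (ι → E)}
    (hμ : ∀ m : ι, μ.map (fun x => x ∘ Equiv.addLeft m) = μ) (e : κ → ι) (m : ι) :
    μ.map (shiftComp e m) = μ.map (· ∘ e) := by
  conv_rhs => rw [← hμ m]
  rw [Measure.map_map (by fun_prop) (by fun_prop)]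
  rfl

variable [Fintype ι]

noncomputable def shiftAverage (e : κ → ι) (π : Measure ((ι → E) × (ι → E))) :
    Measure ((κ → E) × (κ → E)) :=
  (Fintype.card ι : ℝ≥0∞)⁻¹ • ∑ m, π.map (Prod.map (shiftComp e m) (shiftComp e m))

lemma map_fst_shiftAverage {μ : Measure (ι → E)}
    (hμ : ∀ m : ι, μ.map (fun x => x ∘ Equiv.addLeft m) = μ) (e : κ → ι)
    {π : Measure ((ι → E) × (ι → E))} (hπ : π.map Prod.fst = μ) :
    (shiftAverage e π).map Prod.fst = μ.map (· ∘ e) :=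
  map_inv_card_smul_sum_eq measurable_fst fun m => by
    rw [map_fst_map_prodMap (by fun_prop) (by fun_prop), hπ, map_shiftComp hμ]

lemma map_snd_shiftAverage {ν : Measure (ι → E)}
    (hν : ∀ m : ι, ν.map (fun x => x ∘ Equiv.addLeft m) = ν) (e : κ → ι)
    {π : Measure ((ι → E) × (ι → E))} (hπ : π.map Prod.snd = ν) :
    (shiftAverage e π).map Prod.snd = ν.map (· ∘ e) :=
  map_inv_card_smul_sum_eq measurable_snd fun m => by
    rw [map_snd_map_prodMap (by fun_prop) (by fun_prop), hπ, map_shiftComp hν]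

lemma lintegral_shiftAverage_le [Fintype κ] (c : E → E → ℝ≥0∞) (e : κ → ι)
    (π : Measure ((ι → E) × (ι → E))) :
    ∫⁻ q, ∑ i, c (q.1 i) (q.2 i) ∂shiftAverage e π ≤
      (Fintype.card κ / Fintype.card ι : ℝ≥0∞) * ∫⁻ p, ∑ j, c (p.1 j) (p.2 j) ∂π := by
  let C (m : ι) (p : (ι → E) × (ι → E)) : ℝ≥0∞ :=
    ∑ i, c (shiftComp e m p.1 i) (shiftComp e m p.2 i)
  rw [shiftAverage, lintegral_smul_measure, lintegral_finsetSum_measure, smul_eq_mul]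
  calc (Fintype.card ι : ℝ≥0∞)⁻¹ *
        ∑ m, ∫⁻ q, ∑ i, c (q.1 i) (q.2 i) ∂π.map (Prod.map (shiftComp e m) (shiftComp e m))
      ≤ (Fintype.card ι : ℝ≥0∞)⁻¹ * ∑ m, ∫⁻ p, C m p ∂π := by
        gcongr
        exact lintegral_map_le _ _
    _ ≤ (Fintype.card ι : ℝ≥0∞)⁻¹ * ∫⁻ p, ∑ m, C m p ∂π := by
        gcongr
        exact sum_lintegral_le_lintegral_sum _ _
    _ = (Fintype.card ι : ℝ≥0∞)⁻¹ * ∫⁻ p, Fintype.card κ * ∑ j, c (p.1 j) (p.2 j) ∂π := by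
        congr 1
        exact lintegral_congr fun p =>
          (sum_sum_add_eq_card_nsmul (fun j => c (p.1 j) (p.2 j)) e).trans (nsmul_eq_mul _ _)
    _ = _ := by
        rw [lintegral_const_mul' _ _ (natCast_ne_top _), ← mul_assoc, ENNReal.div_eq_inv_mul]

theorem W2sq_l2_map_comp_le [Dist E] [Fintype κ] [Nonempty κ] (e : κ → ι)
    {μ ν : Measure (ι → E)}
    (hμ : ∀ m : ι, μ.map (fun x => x ∘ Equiv.addLeft m) = μ)
    (hν : ∀ m : ι, ν.map (fun x => x ∘ Equiv.addLeft m) = ν) :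
    W2sq (fun ξ η : κ → E => √(∑ i, dist (ξ i) (η i) ^ 2)) (μ.map (· ∘ e)) (ν.map (· ∘ e)) ≤
      (Fintype.card κ / Fintype.card ι : ℝ≥0∞) *
        W2sq (fun ξ η : ι → E => √(∑ i, dist (ξ i) (η i) ^ 2)) μ ν := by
  have hι : (Fintype.card ι : ℝ≥0∞) ≠ 0 := by simp
  refine le_mul_W2sq (ENNReal.div_pos (by simp) (natCast_ne_top _)).ne'
    (ENNReal.div_ne_top (natCast_ne_top _) hι) fun π hπ₁ hπ₂ => ?_
  refine (W2sq_le_lintegral (map_fst_shiftAverage hμ e hπ₁)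
    (map_snd_shiftAverage hν e hπ₂)).trans ?_
  simpa only [ofReal_sqrt_sum_dist_sq_sq] using
    lintegral_shiftAverage_le (fun x y => ENNReal.ofReal (dist x y ^ 2)) e π

end Shift

theorem stmt2_general {E : Type*} [MetricSpace E] [MeasurableSpace E]
    (N k : ℕ) (hk : 1 ≤ k) (hkN : k ≤ N)
    (μN νN : Measure (Fin N → E))
    (hexμ : ∀ σ : Equiv.Perm (Fin N), μN.map (fun x => x ∘ σ) = μN)
    (hexν : ∀ σ : Equiv.Perm (Fin N), νN.map (fun x => x ∘ σ) = νN) :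
    W2sq (fun ξ η : Fin k → E => Real.sqrt (∑ i, dist (ξ i) (η i) ^ 2))
        (μN.map (fun x => fun i : Fin k => x (Fin.castLE hkN i)))
        (νN.map (fun x => fun i : Fin k => x (Fin.castLE hkN i)))
      ≤ ((k : ℝ≥0∞) / (N : ℝ≥0∞)) *
        W2sq (fun ξ η : Fin N → E => Real.sqrt (∑ i, dist (ξ i) (η i) ^ 2)) μN νN := by
  have : NeZero N := ⟨by omega⟩
  have : Nonempty (Fin k) := ⟨⟨0, hk⟩⟩
  have h := W2sq_l2_map_comp_le (E := E) (Fin.castLE hkN)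
    (fun m => hexμ (Equiv.addLeft m)) (fun m => hexν (Equiv.addLeft m))
  rwa [Fintype.card_fin, Fintype.card_fin] at h

/-- For exchangeable measures `μN, νN` on `E^N` with finite second moments, the `k`-marginals
satisfy `W₂(μ^{(k)}, ν^{(k)})² ≤ (k/N) ⬝ W₂(μ^{(N)}, ν^{(N)})²`, where the product spaces carry
the ℓ²-sum metric. -/
theorem stmt2 {E : Type*} [MetricSpace E] [PolishSpace E] [MeasurableSpace E] [BorelSpace E]
    (o : E) (N k : ℕ) (hk : 1 ≤ k) (hkN : k ≤ N)
    (μN νN : Measure (Fin N → E)) [IsProbabilityMeasure μN] [IsProbabilityMeasure νN]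
    (hμ2 : ∫⁻ x, ENNReal.ofReal (∑ i, dist o (x i) ^ 2) ∂μN ≠ ⊤)
    (hν2 : ∫⁻ x, ENNReal.ofReal (∑ i, dist o (x i) ^ 2) ∂νN ≠ ⊤)
    (hexμ : ∀ σ : Equiv.Perm (Fin N), μN.map (fun x => x ∘ σ) = μN)
    (hexν : ∀ σ : Equiv.Perm (Fin N), νN.map (fun x => x ∘ σ) = νN) :
    W2sq (fun ξ η : Fin k → E => Real.sqrt (∑ i, dist (ξ i) (η i) ^ 2))
        (μN.map (fun x => fun i : Fin k => x (Fin.castLE hkN i)))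
        (νN.map (fun x => fun i : Fin k => x (Fin.castLE hkN i)))
      ≤ ((k : ℝ≥0∞) / (N : ℝ≥0∞)) *
        W2sq (fun ξ η : Fin N → E => Real.sqrt (∑ i, dist (ξ i) (η i) ^ 2)) μN νN :=
  stmt2_general N k hk hkN μN νN hexμ hexν
end

section
/- Conversely to the previous statement: if $\mu,\nu$ are probability measures such that $(\nu(F))^p\le\mu(F^p)e^{C}$ for all bounded measurable $F\ge0$ and some $p>1$, $C\ge0$, then $\nu\ll\mu$ and $\int(\frac{d\nu}{d\mu})^{p/(p-1)}d\mu\le e^{C/(p-1)}$. -/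
open MeasureTheory ENNReal

/-!
Testing the inequality on indicators gives `ν ≪ μ`. For the bound, let `f = dν/dμ`,
`q = p/(p-1)` and `r = q - 1 = 1/(p-1)`, and test it on `F = (min f n)^r`, which is bounded:
then `F^p = (min f n)^q`, and `A_n = ∫ (min f n)^q dμ ≤ ∫ f (min f n)^r dμ = ν(F)`, so
`A_n^p ≤ ν(F)^p ≤ A_n e^C`. As `A_n` is finite this gives `A_n ≤ e^{C/(p-1)}`, and monotone
convergence lets `n → ∞`.
-/

lemma Real.le_rpow_inv_sub_one_of_rpow_le_mul {a p K : ℝ} (ha : 0 ≤ a) (hp : 1 < p)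
    (hK : 0 ≤ K) (h : a ^ p ≤ a * K) : a ≤ K ^ (p - 1)⁻¹ := by
  rcases ha.eq_or_lt with rfl | ha
  · positivity
  have hp1 : p - 1 ≠ 0 := sub_ne_zero.2 hp.ne'
  have key : a ^ (p - 1) ≤ K := by
    rw [Real.rpow_sub ha, Real.rpow_one, div_le_iff₀ ha, mul_comm K]
    exact h
  calc a = (a ^ (p - 1)) ^ (p - 1)⁻¹ := (Real.rpow_rpow_inv ha.le hp1).symm
    _ ≤ K ^ (p - 1)⁻¹ :=
      Real.rpow_le_rpow (by positivity) key (inv_nonneg.2 (sub_nonneg.2 hp.le))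

lemma ENNReal.iSup_min_natCast_rpow (a : ℝ≥0∞) {q : ℝ} (hq : 0 < q) :
    ⨆ n : ℕ, min a n ^ q = a ^ q := by
  have h := (orderIsoRpow q hq).map_iSup fun n : ℕ => min a n
  simp only [orderIsoRpow_apply] at h
  rw [← h, ← inf_iSup_eq, iSup_natCast, inf_top_eq]

section

variable {α : Type*} [MeasurableSpace α] {μ ν : Measure α}

lemma lintegral_rpow_eq_iSup_lintegral_min_rpow {f : α → ℝ≥0∞} (hf : Measurable f) {q : ℝ}
    (hq : 0 < q) : ∫⁻ x, f x ^ q ∂μ = ⨆ n : ℕ, ∫⁻ x, min (f x) n ^ q ∂μ := by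
  have hmono : Monotone fun (n : ℕ) x => min (f x) n ^ q := fun m n hmn x =>
    rpow_le_rpow (min_le_min le_rfl (Nat.cast_le.2 hmn)) hq.le
  rw [← lintegral_iSup (fun n => (hf.min measurable_const).pow_const q) hmono]
  simp only [iSup_min_natCast_rpow _ hq]

lemma lintegral_min_rnDeriv_rpow_add_one_le [ν.HaveLebesgueDecomposition μ] (hνμ : ν ≪ μ)
    (c : ℝ≥0∞) {r : ℝ} (hr : 0 ≤ r) :
    ∫⁻ x, min (ν.rnDeriv μ x) c ^ (r + 1) ∂μ ≤ ∫⁻ x, min (ν.rnDeriv μ x) c ^ r ∂ν := by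
  have hmeas : Measurable fun x => min (ν.rnDeriv μ x) c ^ r :=
    ((Measure.measurable_rnDeriv ν μ).min measurable_const).pow_const r
  rw [← lintegral_rnDeriv_mul hνμ hmeas.aemeasurable]
  refine lintegral_mono fun x => ?_
  rw [rpow_add_of_nonneg _ _ hr zero_le_one, rpow_one, mul_comm]
  gcongr
  exact min_le_left _ _

def PowerHarnack (μ ν : Measure α) (p K : ℝ) : Prop :=
  ∀ F : α → ℝ, Measurable F → (∀ x, 0 ≤ F x) → (∃ M, ∀ x, F x ≤ M) →
    (∫ x, F x ∂ν) ^ p ≤ (∫ x, F x ^ p ∂μ) * K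

namespace PowerHarnack

variable {p K : ℝ}

lemma toReal_lintegral_rpow_le (h : PowerHarnack μ ν p K) (hp : 0 ≤ p) {G : α → ℝ≥0∞}
    (hG : Measurable G) {c : ℝ≥0∞} (hc : c ≠ ∞) (hGc : ∀ x, G x ≤ c) :
    (∫⁻ x, G x ∂ν).toReal ^ p ≤ (∫⁻ x, G x ^ p ∂μ).toReal * K := by
  have hGfin : ∀ x, G x < ∞ := fun x => (hGc x).trans_lt hc.lt_top
  have hH := h (fun x => (G x).toReal) hG.ennreal_toReal (fun _ => toReal_nonneg)
    ⟨c.toReal, fun x => toReal_mono hc (hGc x)⟩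
  beta_reduce at hH
  simp only [toReal_rpow] at hH
  rwa [integral_toReal hG.aemeasurable (ae_of_all _ hGfin),
    integral_toReal (hG.pow_const p).aemeasurable
      (ae_of_all _ fun x => rpow_lt_top_of_nonneg hp (hGfin x).ne)] at hH

lemma absolutelyContinuous [IsFiniteMeasure ν] (h : PowerHarnack μ ν p K) (hp : 0 < p) :
    ν ≪ μ := by
  refine Measure.AbsolutelyContinuous.mk fun s hs hμs => ?_
  have hind : Measurable (s.indicator (1 : α → ℝ≥0∞)) := measurable_one.indicator hs
  have hH := h.toReal_lintegral_rpow_le hp.le hind one_ne_top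
    fun x => Set.indicator_le (fun _ _ => le_rfl) x
  have hpow : (fun x => s.indicator (1 : α → ℝ≥0∞) x ^ p) = s.indicator 1 := by
    ext x
    by_cases hx : x ∈ s <;> simp [hx, hp]
  rw [hpow, lintegral_indicator_one hs, lintegral_indicator_one hs, hμs, toReal_zero,
    zero_mul] at hH
  have hνs : (ν s).toReal = 0 :=
    (Real.rpow_eq_zero toReal_nonneg hp.ne').1 (le_antisymm hH (by positivity))
  simpa [toReal_eq_zero_iff, measure_ne_top ν s] using hνs

lemma lintegral_min_rnDeriv_rpow_le [IsFiniteMeasure ν] [ν.HaveLebesgueDecomposition μ]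
    (h : PowerHarnack μ ν p K) (hp : 1 < p) (hK : 0 ≤ K) (hνμ : ν ≪ μ) {c : ℝ≥0∞}
    (hc : c ≠ ∞) :
    ∫⁻ x, min (ν.rnDeriv μ x) c ^ (p / (p - 1)) ∂μ ≤ ENNReal.ofReal (K ^ (p - 1)⁻¹) := by
  have hp1 : p - 1 ≠ 0 := sub_ne_zero.2 hp.ne'
  have hq : p / (p - 1) = (p - 1)⁻¹ + 1 := by field_simp; ring
  have hrp : (p - 1)⁻¹ * p = (p - 1)⁻¹ + 1 := by rw [← hq, inv_mul_eq_div]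
  set g := fun x => min (ν.rnDeriv μ x) c
  set r := (p - 1)⁻¹
  have hr : 0 ≤ r := inv_nonneg.2 (sub_nonneg.2 hp.le)
  rw [hq]
  set A := ∫⁻ x, g x ^ (r + 1) ∂μ
  set B := ∫⁻ x, g x ^ r ∂ν
  have hAB : A ≤ B := lintegral_min_rnDeriv_rpow_add_one_le hνμ c hr
  have hgr : ∀ x, g x ^ r ≤ c ^ r := fun x => rpow_le_rpow (min_le_right _ _) hr
  have hBfin : B ≠ ∞ := by
    refine ne_top_of_le_ne_top ?_ (lintegral_mono hgr)
    rw [lintegral_const]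
    exact mul_ne_top (rpow_ne_top_of_nonneg hr hc) (measure_ne_top ν _)
  have hAfin : A ≠ ∞ := ne_top_of_le_ne_top hBfin hAB
  have hH := h.toReal_lintegral_rpow_le (by linarith)
    (((Measure.measurable_rnDeriv ν μ).min measurable_const).pow_const r)
    (rpow_ne_top_of_nonneg hr hc) hgr
  simp only [← rpow_mul, hrp] at hH
  have hApow : A.toReal ^ p ≤ A.toReal * K :=
    (Real.rpow_le_rpow toReal_nonneg ((toReal_le_toReal hAfin hBfin).2 hAB) (by linarith)).trans
      hH
  rw [← ofReal_toReal hAfin]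
  exact ofReal_le_ofReal (Real.le_rpow_inv_sub_one_of_rpow_le_mul toReal_nonneg hp hK hApow)

end PowerHarnack

end

theorem stmt13_general {α : Type*} [MeasurableSpace α] (μ ν : Measure α)
    [IsProbabilityMeasure μ] [IsProbabilityMeasure ν]
    (p C : ℝ) (hp : 1 < p)
    (hH : ∀ F : α → ℝ, Measurable F → (∀ x, 0 ≤ F x) → (∃ M, ∀ x, F x ≤ M) →
      (∫ x, F x ∂ν) ^ p ≤ (∫ x, F x ^ p ∂μ) * Real.exp C) :
    ν ≪ μ ∧
      ∫⁻ x, (ν.rnDeriv μ x) ^ (p / (p - 1)) ∂μ ≤ ENNReal.ofReal (Real.exp (C / (p - 1))) := by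
  have hH : PowerHarnack μ ν p (Real.exp C) := hH
  have hνμ : ν ≪ μ := hH.absolutelyContinuous (by linarith)
  refine ⟨hνμ, ?_⟩
  rw [lintegral_rpow_eq_iSup_lintegral_min_rpow (Measure.measurable_rnDeriv ν μ)
    (div_pos (by linarith) (by linarith))]
  refine iSup_le fun n => ?_
  calc _ ≤ ENNReal.ofReal (Real.exp C ^ (p - 1)⁻¹) :=
        hH.lintegral_min_rnDeriv_rpow_le hp (Real.exp_pos C).le hνμ (natCast_ne_top n)
    _ = ENNReal.ofReal (Real.exp (C / (p - 1))) := by rw [← Real.exp_mul, div_eq_mul_inv]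

/-- Converse direction: the Harnack-type inequality with power `p`,
`(ν(F))^p ≤ μ(F^p) e^C` for all bounded measurable `F ≥ 0`, implies `ν ≪ μ` and the
reverse-Hölder bound `∫ (dν/dμ)^{p/(p-1)} dμ ≤ e^{C/(p-1)}`. -/
theorem stmt13 {α : Type*} [MeasurableSpace α] (μ ν : Measure α)
    [IsProbabilityMeasure μ] [IsProbabilityMeasure ν]
    (p C : ℝ) (hp : 1 < p) (hC : 0 ≤ C)
    (hH : ∀ F : α → ℝ, Measurable F → (∀ x, 0 ≤ F x) → (∃ M, ∀ x, F x ≤ M) →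
      (∫ x, F x ∂ν) ^ p ≤ (∫ x, F x ^ p ∂μ) * Real.exp C) :
    ν ≪ μ ∧
      ∫⁻ x, (ν.rnDeriv μ x) ^ (p / (p - 1)) ∂μ ≤ ENNReal.ofReal (Real.exp (C / (p - 1))) :=
  stmt13_general μ ν p C hp hH
end
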